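/- Let S be a finite meet-semilattice of subspaces of a finite-dimensional vector space V* closed under sums (dually: an arrangement of linear subspaces closed under sum), and let G ⊆ S. If for every S ∈ S the maximal elements T₁⊥, ..., T_k⊥ of {G⊥ : G ∈ G, G⊥ ⊆ S⊥} form a direct sum with T₁⊥ ⊕ ⋯ ⊕ T_k⊥ = S⊥, then for any 1 ≤ m ≤ k, the subspaces T₁⊥, ..., T_m⊥ are exactly the maximal elements of {G⊥ ∈ G : G⊥ ⊆ T₁⊥ + ⋯ + T_m⊥}. -/

import Mathlib

/-!
Every `g ∈ G` below `W := sSup P` lies below some maximal element `m` of `G` below `U`.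
Since the maximal elements below `U` are independent, `m ∉ P` would make `m` disjoint from `W`,
forcing `g = ⊥`; so `m ∈ P ⊆ {g | g ≤ W}`, and maximality of `g` below `W` gives `g = m`.
Conversely, a member of `P` is maximal below `U`, hence a fortiori below `W ≤ U`.
-/

/-- The maximal elements of `{g ∈ G | g ≤ U}`. -/
def maximalBelow {K V : Type*} [Field K] [AddCommGroup V] [Module K V]
    (G : Set (Submodule K V)) (U : Submodule K V) : Set (Submodule K V) :=
  {g | g ∈ G ∧ g ≤ U ∧ ∀ g' ∈ G, g' ≤ U → g ≤ g' → g' = g}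

theorem sSupIndep.mem_of_le_sSup {α : Type*} [CompleteLattice α] {s t : Set α}
    (hs : sSupIndep s) (ht : t ⊆ s) {a x : α} (ha : a ∈ s) (hx : x ≠ ⊥) (hxa : x ≤ a)
    (hxt : x ≤ sSup t) : a ∈ t := by
  by_contra hat
  exact hx (le_bot_iff.mp (hs.disjoint_sSup ha ht hat hxa hxt))

section maximalBelow

variable {K V : Type*} [Field K] [AddCommGroup V] [Module K V] {G : Set (Submodule K V)}
  {g U W : Submodule K V}

theorem exists_le_mem_maximalBelow (hG : G.Finite) (hg : g ∈ G) (hgU : g ≤ U) :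
    ∃ m ∈ maximalBelow G U, g ≤ m := by
  have hfin : {g ∈ G | g ≤ U}.Finite := hG.subset fun _ h => h.1
  obtain ⟨m, hgm, hm⟩ := hfin.exists_le_maximal ⟨hg, hgU⟩
  exact ⟨m, ⟨hm.1.1, hm.1.2, fun g' hg' hg'U hmg' => (hm.eq_of_le ⟨hg', hg'U⟩ hmg').symm⟩, hgm⟩

theorem mem_maximalBelow_of_le (hg : g ∈ maximalBelow G U) (hgW : g ≤ W) (hWU : W ≤ U) :
    g ∈ maximalBelow G W :=
  ⟨hg.1, hgW, fun g' hg' hg'W => hg.2.2 g' hg' (hg'W.trans hWU)⟩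

end maximalBelow

theorem maximalBelow_of_partial_sum_general
    (K V : Type*) [Field K] [AddCommGroup V] [Module K V]
    (S G : Set (Submodule K V)) (hSfin : S.Finite) (hGS : G ⊆ S)
    (hbot : ∀ U ∈ S, U ≠ ⊥)
    (hbuild : ∀ U ∈ S, sSupIndep (maximalBelow G U) ∧ sSup (maximalBelow G U) = U)
    (U : Submodule K V) (hU : U ∈ S)
    (P : Set (Submodule K V)) (hP : P ⊆ maximalBelow G U) :
    maximalBelow G (sSup P) = P := by
  have hWU : sSup P ≤ U := sSup_le fun p hp => (hP hp).2.1
  refine subset_antisymm (fun g hg => ?_)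
    fun p hp => mem_maximalBelow_of_le (hP hp) (le_sSup hp) hWU
  obtain ⟨hgG, hgW, hgmax⟩ := hg
  obtain ⟨m, hm, hgm⟩ := exists_le_mem_maximalBelow (hSfin.subset hGS) hgG (hgW.trans hWU)
  have hmP : m ∈ P := (hbuild U hU).1.mem_of_le_sSup hP hm (hbot g (hGS hgG)) hgm hgW
  rwa [hgmax m hm.1 (le_sSup hmP) hgm] at hmP

/-- Lemma 2.6(i), linear-algebra core: let `S` be a finite family of subspaces
of `V*` closed under sums and `G ⊆ S` a De Concini–Procesi building set, i.e.
for every `U ∈ S` the maximal elements of `G` contained in `U` form a direct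
sum equal to `U`.  Then for any nonempty subset `P` of the maximal elements of
`G` below `U`, the maximal elements of `G` below the sum `sSup P` are exactly
the members of `P`. -/
theorem maximalBelow_of_partial_sum
    (K V : Type*) [Field K] [AddCommGroup V] [Module K V]
    [FiniteDimensional K V]
    (S G : Set (Submodule K V)) (hSfin : S.Finite) (hGS : G ⊆ S)
    (hbot : ∀ U ∈ S, U ≠ ⊥)
    (hsum : ∀ U ∈ S, ∀ U' ∈ S, U ⊔ U' ∈ S)
    (hbuild : ∀ U ∈ S, sSupIndep (maximalBelow G U) ∧ sSup (maximalBelow G U) = U)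
    (U : Submodule K V) (hU : U ∈ S)
    (P : Set (Submodule K V)) (hPne : P.Nonempty) (hP : P ⊆ maximalBelow G U) :
    maximalBelow G (sSup P) = P :=
  maximalBelow_of_partial_sum_general K V S G hSfin hGS hbot hbuild U hU P hP
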